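/- In any CM-Nim game on k jars, for any fixed values a_1, ..., a_{k-1} of the first k−1 jars there exists a unique natural number x such that (a_1, ..., a_{k-1}, x) is a P-position. -/

import Mathlib

/-- A move in a CM-Nim game with permissible family `𝒮`: choose a permissible
(nonempty) set `S` of jars and a positive number `c` of cookies with `c ≤ p i`
for every `i ∈ S`, and take `c` cookies from each jar in `S`. -/
def CMMove {k : ℕ} (𝒮 : Set (Finset (Fin k))) (p q : Fin k → ℕ) : Prop :=
  ∃ S ∈ 𝒮, S.Nonempty ∧ ∃ c > 0, (∀ i ∈ S, c ≤ p i ∧ q i = p i - c) ∧ ∀ i ∉ S, q i = p i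

lemma CMMove.sum_lt {k : ℕ} {𝒮 : Set (Finset (Fin k))} {p q : Fin k → ℕ}
    (h : CMMove 𝒮 p q) : ∑ i, q i < ∑ i, p i := by
  obtain ⟨S, hS, ⟨i0, hi0⟩, c, hc, h1, h2⟩ := h
  apply Finset.sum_lt_sum
  · intro i _
    by_cases hi : i ∈ S
    · have := h1 i hi; omega
    · rw [h2 i hi]
  · exact ⟨i0, Finset.mem_univ _, by have := h1 i0 hi0; omega⟩

/-- P-positions of a CM-Nim game, defined by well-founded recursion on the
total number of cookies: a position is a P-position iff every move from it
leads to a position that is not a P-position. -/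
def CMPPos {k : ℕ} (𝒮 : Set (Finset (Fin k))) (p : Fin k → ℕ) : Prop :=
  ∀ q, CMMove 𝒮 p q → ¬ CMPPos 𝒮 q
termination_by ∑ i, p i
decreasing_by exact CMMove.sum_lt (by assumption)

/-- Nim with `k` piles: only singletons are permissible. -/
def NimSets (k : ℕ) : Set (Finset (Fin k)) := {S | ∃ i, S = {i}}

/-!
Taking cookies from the last jar alone is always a legal move, so two P-positions cannot differ
only in the last jar. For existence, suppose no `x` works. Moves never increase a jar, and by
uniqueness the P-positions `(b, y)` with `b ≤ a` have `y` bounded by some `M`. From `(a, x)` with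
`x = M + ∑ a + 1` some move reaches a P-position `(b, y)`. It cannot leave the first `k` jars
untouched, since `(a, y)` is not a P-position; so it takes at most `∑ a` cookies from every jar,
whence `y ≥ x - ∑ a > M`, a contradiction.
-/

open Finset

namespace CMMove

variable {k : ℕ} {𝒮 : Set (Finset (Fin k))} {p q : Fin k → ℕ}

theorem le (h : CMMove 𝒮 p q) : q ≤ p := by
  obtain ⟨S, -, -, c, -, hS, hnS⟩ := h
  intro i
  by_cases hi : i ∈ S
  · exact (hS i hi).2.le.trans (Nat.sub_le _ _)
  · exact (hnS i hi).le

/-- All jars lose the same amount `c`, which is at most the content of any jar that changed. -/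
theorem le_add_of_ne (h : CMMove 𝒮 p q) {j : Fin k} (hj : q j ≠ p j) (i : Fin k) :
    p i ≤ q i + p j := by
  obtain ⟨S, -, -, c, -, hS, hnS⟩ := h
  have hjS : j ∈ S := by_contra fun hjS ↦ hj (hnS j hjS)
  have hc := (hS j hjS).1
  by_cases hi : i ∈ S
  · have := hS i hi; omega
  · have := hnS i hi; omega

theorem snoc_of_lt {𝒮 : Set (Finset (Fin (k + 1)))} (h𝒮 : {Fin.last k} ∈ 𝒮) (b : Fin k → ℕ)
    {x y : ℕ} (hxy : x < y) : CMMove 𝒮 (Fin.snoc b y) (Fin.snoc b x) := by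
  refine ⟨{Fin.last k}, h𝒮, singleton_nonempty _, y - x, by omega, ?_, ?_⟩
  · intro i hi
    rw [mem_singleton.1 hi, Fin.snoc_last, Fin.snoc_last]
    omega
  · intro i hi
    obtain ⟨j, rfl⟩ := Fin.exists_castSucc_eq.2 (mem_singleton.not.1 hi)
    simp only [Fin.snoc_castSucc]

theorem snoc_cases {𝒮 : Set (Finset (Fin (k + 1)))} {a b : Fin k → ℕ} {x y : ℕ}
    (h : CMMove 𝒮 (Fin.snoc a x) (Fin.snoc b y)) : b ≤ a ∧ (b = a ∨ x ≤ y + ∑ i, a i) := by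
  have hle := h.le
  refine ⟨fun j ↦ by simpa using hle j.castSucc, ?_⟩
  by_cases hba : b = a
  · exact .inl hba
  obtain ⟨j, hj⟩ := Function.ne_iff.1 hba
  have hlast := h.le_add_of_ne (j := j.castSucc) (by simpa using hj) (Fin.last k)
  simp only [Fin.snoc_last, Fin.snoc_castSucc] at hlast
  have := single_le_sum (fun i _ ↦ Nat.zero_le (a i)) (mem_univ j)
  exact .inr (by omega)

end CMMove

theorem cmPPos_iff {k : ℕ} (𝒮 : Set (Finset (Fin k))) (p : Fin k → ℕ) :
    CMPPos 𝒮 p ↔ ∀ q, CMMove 𝒮 p q → ¬ CMPPos 𝒮 q := by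
  rw [CMPPos]

section LastJar

variable {k : ℕ} {𝒮 : Set (Finset (Fin (k + 1)))}

theorem CMPPos.last_unique (h𝒮 : {Fin.last k} ∈ 𝒮) {b : Fin k → ℕ} {x y : ℕ}
    (hx : CMPPos 𝒮 (Fin.snoc b x)) (hy : CMPPos 𝒮 (Fin.snoc b y)) : x = y := by
  by_contra hxy
  rcases Nat.lt_or_gt_of_ne hxy with hlt | hlt
  · exact (cmPPos_iff 𝒮 _).1 hy _ (CMMove.snoc_of_lt h𝒮 b hlt) hx
  · exact (cmPPos_iff 𝒮 _).1 hx _ (CMMove.snoc_of_lt h𝒮 b hlt) hy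

theorem bddAbove_last_of_cmPPos (h𝒮 : {Fin.last k} ∈ 𝒮) (a : Fin k → ℕ) :
    BddAbove {y | ∃ b ≤ a, CMPPos 𝒮 (Fin.snoc b y)} := by
  have hfin : (⋃ b ∈ Set.Iic a, {y | CMPPos 𝒮 (Fin.snoc b y)}).Finite :=
    (Set.finite_Iic a).biUnion fun b _ ↦
      Set.Subsingleton.finite fun _ hx _ hy ↦ CMPPos.last_unique h𝒮 hx hy
  refine hfin.bddAbove.mono ?_
  rintro y ⟨b, hb, hy⟩
  exact Set.mem_biUnion hb hy

theorem exists_cmPPos_snoc (h𝒮 : {Fin.last k} ∈ 𝒮) (a : Fin k → ℕ) :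
    ∃ x, CMPPos 𝒮 (Fin.snoc a x) := by
  by_contra! hnone
  obtain ⟨M, hM⟩ := bddAbove_last_of_cmPPos h𝒮 a
  have hN := hnone (M + ∑ i, a i + 1)
  simp only [cmPPos_iff 𝒮 (Fin.snoc _ _), not_forall, not_not] at hN
  obtain ⟨q, hmove, hq⟩ := hN
  rw [← Fin.snoc_init_self q] at hmove hq
  obtain ⟨hle, rfl | hfar⟩ := hmove.snoc_cases
  · exact hnone _ hq
  · have := hM ⟨_, hle, hq⟩
    omega

end LastJar

theorem exists_unique_last_jar_general (k : ℕ) (𝒮 : Set (Finset (Fin (k + 1))))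
    (hsingle : ∀ i : Fin (k + 1), ({i} : Finset (Fin (k + 1))) ∈ 𝒮)
    (a : Fin k → ℕ) :
    ∃! x : ℕ, CMPPos 𝒮 (Fin.snoc a x) := by
  obtain ⟨x, hx⟩ := exists_cmPPos_snoc (hsingle (Fin.last k)) a
  exact ⟨x, hx, fun _ hy ↦ CMPPos.last_unique (hsingle (Fin.last k)) hy hx⟩

/-- In any CM-Nim game on `k + 1` jars (a family `𝒮` of nonempty permissible
sets containing every singleton), for any fixed contents `a` of the first `k`
jars there is a unique number `x` of cookies in the last jar making the
position a P-position. -/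
theorem exists_unique_last_jar (k : ℕ) (𝒮 : Set (Finset (Fin (k + 1))))
    (hne : ∀ S ∈ 𝒮, S.Nonempty)
    (hsingle : ∀ i : Fin (k + 1), ({i} : Finset (Fin (k + 1))) ∈ 𝒮)
    (a : Fin k → ℕ) :
    ∃! x : ℕ, CMPPos 𝒮 (Fin.snoc a x) :=
  exists_unique_last_jar_general k 𝒮 hsingle a
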